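/- arXiv:2102.04982 — 4 statements merged into one kernel-verified Lean document; each statement's English description precedes it below -/
import Mathlib

section
/- Distributivity of ⊕ over ⊙ fails for negotiation sets: there exist a nonempty universe X and negotiation sets A, B, C on X such that A ⊕ (B ⊙ C) ≠ (A ⊕ B) ⊙ (A ⊕ C). -/
/-- Minimalization of necessities of negotiation sets (pairs with `A.1 ⊆ A.2`). -/
def odot {X : Type*} (A B : Set X × Set X) : Set X × Set X :=
  (A.1 ∩ B.1, A.2 ∪ B.2)

/-- Relative maximalization of necessities. -/
def oplus {X : Type*} (A B : Set X × Set X) : Set X × Set X :=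
  ((A.1 ∪ B.1) ∩ (A.2 ∩ B.2), A.2 ∩ B.2)

/-- distributivity of `⊕` over `⊙` fails: there are a nonempty
universe `X` and negotiation sets `A, B, C` on `X` with
`A ⊕ (B ⊙ C) ≠ (A ⊕ B) ⊙ (A ⊕ C)`. -/
theorem oplus_not_distrib_odot :
    ∃ (X : Type) (_ : Nonempty X) (A B C : Set X × Set X),
      A.1 ⊆ A.2 ∧ B.1 ⊆ B.2 ∧ C.1 ⊆ C.2 ∧
        oplus A (odot B C) ≠ odot (oplus A B) (oplus A C) := by
  refine ⟨Unit, ⟨()⟩, (Set.univ, Set.univ), (Set.univ, Set.univ), (∅, ∅),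
    le_refl _, le_refl _, le_refl _, ?_⟩
  intro h
  have h1 := congrArg Prod.fst h
  simp only [oplus, odot, Set.ext_iff] at h1
  have := (h1 ()).mp (by simp)
  simp at this
end

section
/- The ⊙⊕-absorption law fails for negotiation sets: there exist a nonempty universe X and negotiation sets A, B on X such that A ⊙ (A ⊕ B) ≠ A. -/
/-- the `⊙⊕`-absorption law fails: there are a nonempty universe `X`
and negotiation sets `A, B` on `X` with `A ⊙ (A ⊕ B) ≠ A`. -/
theorem odot_oplus_absorption_fails :
    ∃ (X : Type) (_ : Nonempty X) (A B : Set X × Set X),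
      A.1 ⊆ A.2 ∧ B.1 ⊆ B.2 ∧ odot A (oplus A B) ≠ A := by
  refine ⟨Unit, ⟨()⟩, (Set.univ, Set.univ), (∅, ∅), subset_rfl, subset_rfl, ?_⟩
  intro h
  have h1 := congrArg Prod.fst h
  simp [odot, oplus] at h1
  exact absurd (h1 ▸ Set.mem_univ ()) (Set.notMem_empty ())
end

section
/- Let X be a nonempty universe equipped with two binary, symmetric and irreflexive relations ↯ (strong contradiction) and ≀ (weak contradiction). If A and B are negotiation sets on X belonging to the class Disc, then A ⊕ B also belongs to Disc. -/
/-- A negotiation set `A` belongs to the class `Disc` (w.r.t. a strong contradiction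
relation `strong` and a weak contradiction relation `weak`) iff no two elements of `A.2`
are strongly contradictory, and no two weakly contradictory elements of `A.2` are such
that one of them lies in `A.1`. -/
def Disc {X : Type*} (strong weak : X → X → Prop) (A : Set X × Set X) : Prop :=
  (¬ ∃ x ∈ A.2, ∃ y ∈ A.2, strong x y) ∧
    (¬ ∃ x ∈ A.2, ∃ y ∈ A.2, weak x y ∧ (x ∈ A.1 ∨ y ∈ A.1))

/-- if `strong` and `weak` are symmetric and irreflexive relations on a
nonempty universe `X`, and `A, B` are negotiation sets in `Disc`, then
`A ⊕ B ∈ Disc`. -/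
theorem disc_closed_under_oplus {X : Type*} [Nonempty X]
    (strong weak : X → X → Prop)
    (hs₁ : Symmetric strong) (hs₂ : Irreflexive strong)
    (hw₁ : Symmetric weak) (hw₂ : Irreflexive weak)
    (A B : Set X × Set X) (hA : A.1 ⊆ A.2) (hB : B.1 ⊆ B.2)
    (hAd : Disc strong weak A) (hBd : Disc strong weak B) :
    Disc strong weak (oplus A B) := by
  obtain ⟨hA1, hA2⟩ := hAd
  obtain ⟨hB1, hB2⟩ := hBd
  constructor
  · rintro ⟨x, ⟨hxA, hxB⟩, y, ⟨hyA, hyB⟩, h⟩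
    exact hA1 ⟨x, hxA, y, hyA, h⟩
  · rintro ⟨x, ⟨hxA, hxB⟩, y, ⟨hyA, hyB⟩, h, hmem⟩
    rcases hmem with ⟨hx1 | hx1, -, -⟩ | ⟨hy1 | hy1, -, -⟩
    · exact hA2 ⟨x, hxA, y, hyA, h, Or.inl hx1⟩
    · exact hB2 ⟨x, hxB, y, hyB, h, Or.inl hx1⟩
    · exact hA2 ⟨x, hxA, y, hyA, h, Or.inr hy1⟩
    · exact hB2 ⟨x, hxB, y, hyB, h, Or.inr hy1⟩
end

section
/- Let X be a nonempty universe equipped with two binary, symmetric and irreflexive relations ↯ and ≀, and let A, B be negotiation sets on X belonging to the class Disc. Then there are no x, y ∈ (A ⊙ B)² such that x ≀ y and x ∈ (A ⊙ B)¹ (and symmetrically no such pair with y ∈ (A ⊙ B)¹), where A ⊙ B = [A¹ ∩ B¹, A² ∪ B²]. -/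
/-- if `strong` and `weak` are symmetric and irreflexive relations on a
nonempty universe `X`, and `A, B` are negotiation sets in `Disc`, then there are no
`x, y ∈ (A ⊙ B).2` with `x ≀ y` (i.e. `weak x y`) such that `x ∈ (A ⊙ B).1` or
`y ∈ (A ⊙ B).1`. -/
theorem odot_no_weak_contradiction_with_necessity {X : Type*} [Nonempty X]
    (strong weak : X → X → Prop)
    (hs₁ : Symmetric strong) (hs₂ : Irreflexive strong)
    (hw₁ : Symmetric weak) (hw₂ : Irreflexive weak)
    (A B : Set X × Set X) (hA : A.1 ⊆ A.2) (hB : B.1 ⊆ B.2)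
    (hAd : Disc strong weak A) (hBd : Disc strong weak B) :
    ¬ ∃ x ∈ (odot A B).2, ∃ y ∈ (odot A B).2,
        weak x y ∧ (x ∈ (odot A B).1 ∨ y ∈ (odot A B).1) := by
  rintro ⟨x, hx, y, hy, hw, hmem⟩
  obtain ⟨-, hAw⟩ := hAd
  obtain ⟨-, hBw⟩ := hBd
  rcases hmem with ⟨hxA, hxB⟩ | ⟨hyA, hyB⟩
  · rcases hy with hyA2 | hyB2
    · exact hAw ⟨x, hA hxA, y, hyA2, hw, Or.inl hxA⟩
    · exact hBw ⟨x, hB hxB, y, hyB2, hw, Or.inl hxB⟩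
  · rcases hx with hxA2 | hxB2
    · exact hAw ⟨x, hxA2, y, hA hyA, hw, Or.inr hyA⟩
    · exact hBw ⟨x, hxB2, y, hB hyB, hw, Or.inr hyB⟩
end
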